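/- Let a < b be real numbers and let z be a real number with z > b or z < a. Then (1/π) · ∫_a^b (1/(z−t)) · √((t−a)/(b−t)) dt = √((z−a)/(z−b)) − 1, where all square roots are of positive real numbers. -/

import Mathlib

/-!
With `w = √((t - a) / (b - t))` and `σ = √((z - a) / (z - b))`, the integrand is the derivative of
`2 (σ arctan (w / σ) - arctan w)`: as a function of `w` this is the partial fraction decomposition
of `(σ² - 1) w² / ((σ² + w²) (1 + w²))`. As `t` runs from `a` to `b`, `w` runs from `0` to `∞`, so
the integral is `2 (σ π / 2 - π / 2) = π (σ - 1)`. The integrand is `√(t - a) (b - t)^(-1/2)` times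
a function continuous on `[a, b]`, hence integrable, and the improper form of the fundamental
theorem of calculus applies.
-/

open MeasureTheory intervalIntegral Real Set Filter Topology

theorem hasDerivAt_mul_arctan_div_sub_arctan {f : ℝ → ℝ} {f' x s : ℝ} (hs : s ≠ 0)
    (hf : HasDerivAt f f' x) :
    HasDerivAt (fun y => s * arctan (f y / s) - arctan (f y))
      ((s ^ 2 - 1) * f x ^ 2 / ((s ^ 2 + f x ^ 2) * (1 + f x ^ 2)) * f') x := by
  refine (((hf.div_const s).arctan.const_mul s).sub hf.arctan).congr_deriv ?_
  have : s ^ 2 + f x ^ 2 ≠ 0 := by positivity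
  field_simp
  ring

theorem tendsto_mul_arctan_div_sub_arctan_atTop {s : ℝ} (hs : 0 < s) :
    Tendsto (fun w => s * arctan (w / s) - arctan w) atTop (𝓝 ((s - 1) * (π / 2))) := by
  have h := tendsto_arctan_atTop.mono_right nhdsWithin_le_nhds
  rw [sub_one_mul]
  exact ((h.comp (tendsto_id.atTop_div_const hs)).const_mul s).sub h

section SqrtDivSub

variable {a b : ℝ}

theorem hasDerivAt_sqrt_div_sub {t : ℝ} (ht : t ∈ Ioo a b) :
    HasDerivAt (fun t => √((t - a) / (b - t)))
      ((b - a) * √((t - a) / (b - t)) / (2 * (t - a) * (b - t))) t := by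
  have hta : t - a ≠ 0 := (sub_pos.2 ht.1).ne'
  have hbt : b - t ≠ 0 := (sub_pos.2 ht.2).ne'
  have hpos : 0 < (t - a) / (b - t) := div_pos (sub_pos.2 ht.1) (sub_pos.2 ht.2)
  have hratio : HasDerivAt (fun t => (t - a) / (b - t)) ((b - a) / (b - t) ^ 2) t := by
    refine (((hasDerivAt_id t).sub_const a).div ((hasDerivAt_id t).const_sub b) hbt).congr_deriv ?_
    simp only [id]
    ring
  refine (hratio.sqrt hpos.ne').congr_deriv ?_
  have hsqrt := (sqrt_pos.2 hpos).ne'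
  field_simp
  rw [sq_sqrt hpos.le]
  field_simp

theorem tendsto_sqrt_div_sub_nhdsGT (hab : a ≠ b) :
    Tendsto (fun t => √((t - a) / (b - t))) (𝓝[>] a) (𝓝 0) := by
  have hba : b - a ≠ 0 := sub_ne_zero.2 hab.symm
  have hcont : ContinuousAt (fun t => √((t - a) / (b - t))) a := by
    fun_prop (disch := assumption)
  simpa using hcont.tendsto.mono_left nhdsWithin_le_nhds

theorem tendsto_sqrt_div_sub_nhdsLT (hab : a < b) :
    Tendsto (fun t => √((t - a) / (b - t))) (𝓝[<] b) atTop := by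
  have hnum : Tendsto (fun t => t - a) (𝓝[<] b) (𝓝 (b - a)) :=
    (continuous_sub_right a).continuousWithinAt.tendsto
  have hden : Tendsto (fun t => b - t) (𝓝[<] b) (𝓝[>] 0) := by
    refine tendsto_nhdsWithin_of_tendsto_nhds_of_eventually_within _ ?_ ?_
    · simpa using ((continuous_sub_left b).tendsto b).mono_left nhdsWithin_le_nhds
    · filter_upwards [self_mem_nhdsWithin] with t (ht : t < b) using sub_pos.2 ht
  exact tendsto_sqrt_atTop.comp (hnum.pos_mul_atTop (sub_pos.2 hab) hden.inv_tendsto_nhdsGT_zero)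

theorem intervalIntegrable_sqrt_div_sub (hab : a ≤ b) :
    IntervalIntegrable (fun t => √((t - a) / (b - t))) volume a b := by
  have hrpow : IntervalIntegrable (fun t => (b - t) ^ (-(1 / 2) : ℝ)) volume a b := by
    simpa using ((intervalIntegrable_rpow' (a := 0) (b := b - a) (r := -(1 / 2))
      (by norm_num)).comp_sub_left b).symm
  refine (hrpow.continuousOn_mul (g := fun t => √(t - a)) (by fun_prop)).congr_uIoo
    fun t ht => ?_
  rw [uIoo_of_le hab] at ht
  show √(t - a) * (b - t) ^ (-(1 / 2) : ℝ) = √((t - a) / (b - t))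
  rw [sqrt_div' _ (sub_pos.2 ht.2).le, rpow_neg (sub_pos.2 ht.2).le, ← sqrt_eq_rpow,
    div_eq_mul_inv]

end SqrtDivSub

section OutsideInterval

variable {a b z : ℝ}

theorem sub_ne_zero_of_mem_Icc (hz : z > b ∨ z < a) {t : ℝ} (ht : t ∈ Icc a b) : z - t ≠ 0 := by
  rcases hz with h | h
  · exact (sub_pos.2 (ht.2.trans_lt h)).ne'
  · exact (sub_neg.2 (h.trans_le ht.1)).ne

theorem div_sub_sub_pos (hab : a < b) (hz : z > b ∨ z < a) : 0 < (z - a) / (z - b) := by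
  rcases hz with h | h
  · exact div_pos (by linarith) (by linarith)
  · exact div_pos_of_neg_of_neg (by linarith) (by linarith)

theorem hasDerivAt_two_mul_arctan_sqrt_div_sub (hab : a < b) (hz : z > b ∨ z < a) {t : ℝ}
    (ht : t ∈ Ioo a b) :
    HasDerivAt (fun t => 2 * (√((z - a) / (z - b)) *
        arctan (√((t - a) / (b - t)) / √((z - a) / (z - b))) - arctan √((t - a) / (b - t))))
      (1 / (z - t) * √((t - a) / (b - t))) t := by
  have hσ := sqrt_pos.2 (div_sub_sub_pos hab hz)
  refine ((hasDerivAt_mul_arctan_div_sub_arctan hσ.ne'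
    (hasDerivAt_sqrt_div_sub ht)).const_mul 2).congr_deriv ?_
  have hzt := sub_ne_zero_of_mem_Icc hz (Ioo_subset_Icc_self ht)
  have hzb := sub_ne_zero_of_mem_Icc hz (right_mem_Icc.2 hab.le)
  have hta := (sub_pos.2 ht.1).ne'
  have hbt := (sub_pos.2 ht.2).ne'
  have hba := (sub_pos.2 hab).ne'
  have hsum : (z - a) / (z - b) + (t - a) / (b - t) = (b - a) * (z - t) / ((z - b) * (b - t)) := by
    field_simp
    ring
  have hσ1 : (z - a) / (z - b) - 1 = (b - a) / (z - b) := by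
    field_simp
    ring
  have hw1 : 1 + (t - a) / (b - t) = (b - a) / (b - t) := by
    field_simp
    ring
  rw [sq_sqrt (div_sub_sub_pos hab hz).le, sq_sqrt (div_pos (sub_pos.2 ht.1) (sub_pos.2 ht.2)).le,
    hsum, hσ1, hw1]
  field_simp

end OutsideInterval

theorem integral_inv_mul_sqrt_ratio (a b z : ℝ) (hab : a < b) (hz : z > b ∨ z < a) :
    (1 / Real.pi) * (∫ t in a..b, (1 / (z - t)) * Real.sqrt ((t - a) / (b - t))) =
      Real.sqrt ((z - a) / (z - b)) - 1 := by
  set σ := √((z - a) / (z - b))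
  have hσ : 0 < σ := sqrt_pos.2 (div_sub_sub_pos hab hz)
  set G : ℝ → ℝ := fun w => 2 * (σ * arctan (w / σ) - arctan w)
  have hint : IntervalIntegrable (fun t => 1 / (z - t) * √((t - a) / (b - t))) volume a b :=
    (intervalIntegrable_sqrt_div_sub hab.le).continuousOn_mul <| continuousOn_const.div
      (by fun_prop) fun t ht => sub_ne_zero_of_mem_Icc hz (uIcc_of_le hab.le ▸ ht)
  have hGa : Tendsto (G ∘ fun t => √((t - a) / (b - t))) (𝓝[>] a) (𝓝 0) := by
    have := ((show Continuous G by fun_prop).tendsto 0).comp (tendsto_sqrt_div_sub_nhdsGT hab.ne)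
    rwa [show G 0 = 0 by simp [G]] at this
  have hGb : Tendsto (G ∘ fun t => √((t - a) / (b - t))) (𝓝[<] b) (𝓝 (2 * ((σ - 1) * (π / 2)))) :=
    ((tendsto_mul_arctan_div_sub_arctan_atTop hσ).const_mul 2).comp
      (tendsto_sqrt_div_sub_nhdsLT hab)
  rw [integral_eq_sub_of_hasDerivAt_of_tendsto hab
    (fun t ht => hasDerivAt_two_mul_arctan_sqrt_div_sub hab hz ht) hint hGa hGb]
  field_simp
  ring
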